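/- The Hilbert transform of x ↦ sin(mx)/x (for m > 0) is x ↦ (cos(mx) − 1)/x, where the Hilbert transform is defined as (ℋf)(y) = (1/π) PV ∫ f(x)/(x − y) dx. -/

import Mathlib

/-!
Substituting `x = y + u` and pairing `u` with `-u`, the truncated principal value integral
becomes `∫_ε^∞ (F u + F (-u)) du` with `F u = sin (m (u + y)) / ((u + y) u)`. By partial
fractions, `F u + F (-u) = (m / y) (2 cos (m y) sinc (m u) - sinc (m (u + y)) - sinc (m (u - y)))`,
so the integral is a combination of values of the sine integral `Si x = ∫₀ˣ sinc`
(`sineIntegral`) and of its limit `Si ∞ = π / 2`; at `ε = 0` the `Si` terms cancel by oddness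
and leave `π (cos (m y) - 1) / y`.

The Dirichlet integral `Si ∞ = π / 2` is obtained along the odd multiples of `π / 2` from
the kernel identity `∫₀^{π/2} sin ((2n + 1) t) / sin t dt = π / 2` and the Riemann–Lebesgue
lemma for the bounded function `1 / sin t - 1 / t`.
-/

open MeasureTheory Filter Topology

/-- `HilbertTransformAt f y L` means the principal-value Hilbert transform
`(1/π) PV ∫ f(x)/(x - y) dx` exists at `y` and equals `L`. -/
def HilbertTransformAt (f : ℝ → ℝ) (y L : ℝ) : Prop :=
  Tendsto (fun ε : ℝ => (1 / Real.pi) * ∫ x in {x : ℝ | ε < |x - y|}, f x / (x - y))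
    (𝓝[>] 0) (𝓝 L)

open Set Real
open scoped FourierTransform

theorem tendsto_integral_mul_sin_atTop {g : ℝ → ℝ} (hg : Integrable g) :
    Tendsto (fun r : ℝ => ∫ t, g t * sin (r * t)) atTop (𝓝 0) := by
  have hRL := (Complex.continuous_im.tendsto 0).comp
    ((Real.tendsto_integral_exp_smul_cocompact fun v => (g v : ℂ)).mono_left atTop_le_cocompact)
  have him (w : ℝ) : (∫ v : ℝ, 𝐞 (-(v * w)) • (g v : ℂ)).im =
      -∫ t, g t * sin (2 * π * w * t) := by
    have hint : Integrable fun v : ℝ => 𝐞 (-(v * w)) • (g v : ℂ) := by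
      simpa [mul_comm] using (Real.fourierIntegral_convergent_iff w).2 hg.ofReal
    rw [← Complex.imCLM_apply, ← Complex.imCLM.integral_comp_comm hint, ← integral_neg]
    congr 1 with t
    simp only [Real.fourierChar_apply, Circle.smul_def, smul_eq_mul, Complex.imCLM_apply,
      Complex.mul_im, Complex.exp_ofReal_mul_I_im, Complex.exp_ofReal_mul_I_re,
      Complex.ofReal_im, Complex.ofReal_re, mul_zero, zero_add]
    rw [show 2 * π * -(t * w) = -(2 * π * w * t) by ring, sin_neg, neg_mul, mul_comm]
  have := hRL.neg.comp (tendsto_id.atTop_div_const (by positivity : (0:ℝ) < 2 * π))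
  simp only [Function.comp_def, him, neg_neg, Complex.zero_im, neg_zero, id] at this
  refine this.congr fun r => ?_
  field_simp

theorem tendsto_setIntegral_mul_sin_atTop {g : ℝ → ℝ} {s : Set ℝ} (hs : MeasurableSet s)
    (hg : IntegrableOn g s) :
    Tendsto (fun r : ℝ => ∫ t in s, g t * sin (r * t)) atTop (𝓝 0) := by
  refine (tendsto_integral_mul_sin_atTop ((integrable_indicator_iff hs).2 hg)).congr fun r => ?_
  rw [← integral_indicator hs]
  congr 1 with t
  by_cases ht : t ∈ s <;> simp [ht]

theorem sin_two_mul_add_one_mul_div_sin (n : ℕ) {t : ℝ} (ht : sin t ≠ 0) :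
    sin ((2 * n + 1) * t) / sin t = 1 + ∑ k ∈ Finset.range n, 2 * cos (2 * (k + 1) * t) := by
  induction n with
  | zero => simp [ht]
  | succ n ih =>
    rw [Finset.sum_range_succ, ← add_assoc, ← ih, div_add' _ _ _ ht, div_left_inj' ht]
    push_cast
    rw [show (2 * (n + 1 : ℝ) + 1) * t = 2 * (n + 1) * t + t by ring,
      show (2 * n + 1 : ℝ) * t = 2 * (n + 1) * t - t by ring, sin_add, sin_sub]
    ring

theorem integral_one_add_sum_cos (n : ℕ) :
    ∫ t in 0..π / 2, (1 + ∑ k ∈ Finset.range n, 2 * cos (2 * (k + 1) * t)) = π / 2 := by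
  have hcos (k : ℕ) : ∫ t in 0..π / 2, 2 * cos (2 * (k + 1) * t) = 0 := by
    rw [intervalIntegral.integral_const_mul,
      intervalIntegral.integral_comp_mul_left _ (by positivity), integral_cos,
      show 2 * (k + 1 : ℝ) * (π / 2) = ((k + 1 : ℕ) : ℝ) * π by push_cast; ring,
      sin_nat_mul_pi]
    simp
  rw [intervalIntegral.integral_add intervalIntegrable_const, intervalIntegral.integral_finsetSum]
  · simp [hcos]
  · exact fun k _ => (by fun_prop : Continuous _).intervalIntegrable _ _
  · exact (continuous_finsetSum _ fun k _ => by fun_prop).intervalIntegrable _ _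

theorem abs_inv_sin_sub_inv_le_one {t : ℝ} (h0 : 0 < t) (h1 : t ≤ π / 2) :
    |(sin t)⁻¹ - t⁻¹| ≤ 1 := by
  have hsin : 2 / π * t ≤ sin t := mul_le_sin h0.le h1
  have hs : 0 < sin t := lt_of_lt_of_le (by positivity) hsin
  have hcube : t - t ^ 3 / 6 < sin t := sin_gt_sub_cube h0
  have hle : sin t ≤ t := sin_le h0.le
  rw [inv_sub_inv hs.ne' h0.ne', abs_of_nonneg (div_nonneg (by linarith) (by positivity)),
    div_le_one (by positivity)]
  have hsmall : t / 6 ≤ 2 / π := by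
    rw [div_le_div_iff₀ (by norm_num) pi_pos]
    nlinarith [pi_le_four]
  nlinarith [mul_le_mul_of_nonneg_left hsmall (sq_nonneg t), mul_le_mul_of_nonneg_left hsin h0.le]

theorem integrableOn_inv_sin_sub_inv :
    IntegrableOn (fun t => (sin t)⁻¹ - t⁻¹) (Ioc 0 (π / 2)) :=
  Measure.integrableOn_of_bounded (M := 1) measure_Ioc_lt_top.ne (by fun_prop)
    ((ae_restrict_iff' measurableSet_Ioc).2 <| ae_of_all _ fun _ ht =>
      abs_inv_sin_sub_inv_le_one ht.1 ht.2)

noncomputable def sineIntegral (x : ℝ) : ℝ := ∫ t in 0..x, sinc t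

theorem sineIntegral_zero : sineIntegral 0 = 0 := intervalIntegral.integral_same

@[fun_prop]
theorem continuous_sineIntegral : Continuous sineIntegral :=
  intervalIntegral.continuous_primitive (fun _ _ => continuous_sinc.intervalIntegrable _ _) 0

theorem sineIntegral_neg (x : ℝ) : sineIntegral (-x) = -sineIntegral x := by
  have h := intervalIntegral.integral_comp_neg (a := 0) (b := x) sinc
  simp only [sinc_neg, neg_zero] at h
  rw [sineIntegral, sineIntegral, intervalIntegral.integral_symm, ← h]

theorem integral_sinc (a b : ℝ) : ∫ t in a..b, sinc t = sineIntegral b - sineIntegral a :=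
  (intervalIntegral.integral_interval_sub_left (continuous_sinc.intervalIntegrable _ _)
    (continuous_sinc.intervalIntegrable _ _)).symm

theorem integral_sinc_mul_add {m : ℝ} (hm : m ≠ 0) (c a b : ℝ) :
    ∫ u in a..b, sinc (m * (u + c)) =
      (sineIntegral (m * (b + c)) - sineIntegral (m * (a + c))) / m := by
  rw [intervalIntegral.integral_comp_add_right (fun u => sinc (m * u)),
    intervalIntegral.integral_comp_mul_left _ hm, integral_sinc, smul_eq_mul, inv_mul_eq_div]

theorem abs_sineIntegral_sub_le {a b c : ℝ} (hc : 0 < c) (ha : c ≤ a) (hb : c ≤ b) :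
    |sineIntegral b - sineIntegral a| ≤ |b - a| / c := by
  rw [← integral_sinc, div_eq_inv_mul, ← Real.norm_eq_abs]
  refine intervalIntegral.norm_integral_le_of_norm_le_const fun x hx => ?_
  have hcx : c < x := (le_min ha hb).trans_lt hx.1
  have hx0 : 0 < x := hc.trans hcx
  rw [Real.norm_eq_abs, sinc_of_ne_zero hx0.ne', abs_div, abs_of_pos hx0, ← one_div]
  exact div_le_div₀ zero_le_one (abs_sin_le_one x) hc hcx.le

theorem sineIntegral_odd_mul_pi_div_two (n : ℕ) :
    sineIntegral ((2 * n + 1) * (π / 2)) =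
      π / 2 - ∫ t in 0..π / 2, ((sin t)⁻¹ - t⁻¹) * sin ((2 * n + 1) * t) := by
  have hl : (0 : ℝ) < 2 * n + 1 := by positivity
  have hpt : ∀ t ∈ Ioc 0 (π / 2), (2 * n + 1) * sinc ((2 * n + 1) * t) =
      (1 + ∑ k ∈ Finset.range n, 2 * cos (2 * (k + 1) * t)) -
        ((sin t)⁻¹ - t⁻¹) * sin ((2 * n + 1) * t) := by
    intro t ht
    have hs : sin t ≠ 0 := (sin_pos_of_pos_of_lt_pi ht.1 (by linarith [ht.2, pi_pos])).ne'
    rw [← sin_two_mul_add_one_mul_div_sin n hs, sinc_of_ne_zero (by have := ht.1; positivity)]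
    field_simp
    ring
  have hint : IntervalIntegrable (fun t => ((sin t)⁻¹ - t⁻¹) * sin ((2 * n + 1) * t)) volume
      0 (π / 2) := by
    rw [intervalIntegrable_iff_integrableOn_Ioc_of_le (by positivity)]
    exact integrableOn_inv_sin_sub_inv.mul_bdd (by fun_prop)
      (ae_of_all _ fun t => by simpa using abs_sin_le_one _)
  calc sineIntegral ((2 * n + 1) * (π / 2))
      = ∫ t in 0..π / 2, (2 * n + 1) * sinc ((2 * n + 1) * t) := by
        rw [intervalIntegral.integral_const_mul, intervalIntegral.integral_comp_mul_left _ hl.ne',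
          mul_zero, smul_eq_mul, mul_inv_cancel_left₀ hl.ne', sineIntegral]
    _ = ∫ t in 0..π / 2, ((1 + ∑ k ∈ Finset.range n, 2 * cos (2 * (k + 1) * t)) -
          ((sin t)⁻¹ - t⁻¹) * sin ((2 * n + 1) * t)) := by
        refine intervalIntegral.integral_congr_ae (ae_of_all _ fun t ht => hpt t ?_)
        rwa [uIoc_of_le (by positivity)] at ht
    _ = π / 2 - ∫ t in 0..π / 2, ((sin t)⁻¹ - t⁻¹) * sin ((2 * n + 1) * t) := by
        rw [intervalIntegral.integral_sub _ hint, integral_one_add_sum_cos]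
        exact (continuous_const.add
          (continuous_finsetSum _ fun k _ => by fun_prop)).intervalIntegrable _ _

theorem tendsto_sineIntegral_odd_mul_pi_div_two :
    Tendsto (fun n : ℕ => sineIntegral ((2 * n + 1) * (π / 2))) atTop (𝓝 (π / 2)) := by
  have hodd : Tendsto (fun n : ℕ => (2 * n + 1 : ℝ)) atTop atTop :=
    tendsto_atTop_add_const_right _ _ (tendsto_natCast_atTop_atTop.const_mul_atTop two_pos)
  have hRL := (tendsto_setIntegral_mul_sin_atTop measurableSet_Ioc
    integrableOn_inv_sin_sub_inv).comp hodd
  simpa [sineIntegral_odd_mul_pi_div_two, Function.comp_def,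
    intervalIntegral.integral_of_le pi_div_two_pos.le] using hRL.const_sub (π / 2)

theorem tendsto_sineIntegral_atTop : Tendsto sineIntegral atTop (𝓝 (π / 2)) := by
  set N : ℝ → ℕ := fun x => ⌊x / π⌋₊
  have hN : Tendsto N atTop atTop :=
    tendsto_nat_floor_atTop.comp (tendsto_id.atTop_div_const pi_pos)
  refine (tendsto_sineIntegral_odd_mul_pi_div_two.comp hN).congr_dist
    (squeeze_zero' (Eventually.of_forall fun _ => dist_nonneg) ?_
      ((tendsto_atTop_add_const_right _ (-(π / 2)) tendsto_id).const_div_atTop (π / 2)))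
  -- `x` lies within `π / 2` of the odd multiple `(2 ⌊x / π⌋ + 1) π / 2`
  filter_upwards [eventually_gt_atTop (π / 2)] with x hx
  have hlo : N x * π ≤ x :=
    (le_div_iff₀ pi_pos).1 (Nat.floor_le (div_nonneg (by linarith [pi_pos]) pi_pos.le))
  have hhi : x < N x * π + π := by
    have := (div_lt_iff₀ pi_pos).1 (Nat.lt_floor_add_one (x / π))
    linarith
  have ht : (2 * N x + 1) * (π / 2) = N x * π + π / 2 := by ring
  rw [Function.comp_apply, dist_comm, Real.dist_eq, id]
  refine (abs_sineIntegral_sub_le (c := x - π / 2) (by linarith) (by linarith)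
    (by linarith)).trans ?_
  rw [← sub_eq_add_neg]
  gcongr
  rw [abs_le]
  constructor <;> linarith

theorem tendsto_integral_sinc_mul_add {m : ℝ} (hm : 0 < m) (c a : ℝ) :
    Tendsto (fun R => ∫ u in a..R, sinc (m * (u + c))) atTop
      (𝓝 ((π / 2 - sineIntegral (m * (a + c))) / m)) := by
  simp only [integral_sinc_mul_add hm.ne']
  exact ((tendsto_sineIntegral_atTop.comp
    ((tendsto_atTop_add_const_right _ c tendsto_id).const_mul_atTop hm)).sub_const _).div_const m

theorem abs_sin_mul_div_le {m : ℝ} (hm : 0 ≤ m) (z : ℝ) :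
    |sin (m * z) / z| ≤ (1 + m) / (1 + |z|) := by
  rcases eq_or_ne z 0 with rfl | hz
  · simp; positivity
  have hz' : 0 < |z| := abs_pos.2 hz
  have h₁ : |sin (m * z) / z| ≤ m := by
    rw [abs_div, div_le_iff₀ hz']
    simpa [abs_mul, abs_of_nonneg hm] using abs_sin_le_abs (x := m * z)
  have h₂ : |sin (m * z) / z| * |z| ≤ 1 := by
    rw [abs_div, div_mul_cancel₀ _ hz'.ne']
    exact abs_sin_le_one _
  rw [le_div_iff₀ (by positivity)]
  linarith

theorem integrableOn_div_of_abs_le {h : ℝ → ℝ} {C ε : ℝ} (hε : 0 < ε)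
    (hh : Measurable h) (hb : ∀ u, |h u| ≤ C / (1 + |u|)) :
    IntegrableOn (fun u => h u / u) {u | ε < |u|} := by
  have hC : 0 ≤ C := by simpa using (abs_nonneg (h 0)).trans (hb 0)
  refine Integrable.mono' ((integrable_inv_one_add_sq.const_mul (C * (1 + ε⁻¹))).integrableOn)
    (hh.div measurable_id).aestronglyMeasurable ?_
  refine (ae_restrict_iff' (measurableSet_lt measurable_const measurable_id.abs)).2
    (ae_of_all _ fun u (hu : ε < |u|) => ?_)
  have hu₀ : 0 < |u| := hε.trans hu
  have hinv : |u|⁻¹ ≤ (1 + ε⁻¹) / (1 + |u|) := by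
    rw [le_div_iff₀ (by positivity), mul_add, inv_mul_cancel₀ hu₀.ne', mul_one, add_comm]
    exact add_le_add_right (inv_anti₀ hε hu.le) 1
  rw [Real.norm_eq_abs, abs_div, div_eq_mul_inv]
  calc |h u| * |u|⁻¹ ≤ C / (1 + |u|) * ((1 + ε⁻¹) / (1 + |u|)) :=
        mul_le_mul (hb u) hinv (by positivity) (by positivity)
    _ = C * (1 + ε⁻¹) * ((1 + |u|) ^ 2)⁻¹ := by rw [sq, mul_inv]; ring
    _ ≤ C * (1 + ε⁻¹) * (1 + u ^ 2)⁻¹ := by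
        gcongr
        nlinarith [sq_abs u]

theorem integrableOn_sin_mul_add_div_add_div {m : ℝ} (hm : 0 ≤ m) (y : ℝ) {ε : ℝ}
    (hε : 0 < ε) :
    IntegrableOn (fun u => sin (m * (u + y)) / (u + y) / u) {u | ε < |u|} := by
  refine integrableOn_div_of_abs_le (C := (1 + m) * (1 + |y|)) hε (by fun_prop) fun u => ?_
  refine (abs_sin_mul_div_le hm (u + y)).trans ?_
  rw [div_le_div_iff₀ (by positivity) (by positivity)]
  have : |u| ≤ |u + y| + |y| := by simpa using abs_sub (u + y) y
  have : 1 + |u| ≤ (1 + |y|) * (1 + |u + y|) := by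
    nlinarith [mul_nonneg (abs_nonneg y) (abs_nonneg (u + y))]
  nlinarith [mul_le_mul_of_nonneg_left this (by linarith : (0 : ℝ) ≤ 1 + m)]

theorem setIntegral_abs_sub_gt_eq (h : ℝ → ℝ) (y ε : ℝ) :
    ∫ x in {x | ε < |x - y|}, h x = ∫ u in {u | ε < |u|}, h (u + y) := by
  rw [← (measurePreserving_add_right volume y).setIntegral_preimage_emb
    (measurableEmbedding_addRight y)]
  simp

theorem tendsto_intervalIntegral_add_comp_neg {F : ℝ → ℝ} {ε : ℝ} (hε : 0 ≤ ε)
    (hF : IntegrableOn F {u | ε < |u|}) :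
    Tendsto (fun R => ∫ u in ε..R, (F u + F (-u))) atTop
      (𝓝 (∫ u in {u | ε < |u|}, F u)) := by
  have hS : {u : ℝ | ε < |u|} = Iio (-ε) ∪ Ioi ε := by
    ext u; simp [lt_abs, lt_neg, or_comm]
  have hFneg : IntegrableOn (fun u => F (-u)) {u | ε < |u|} := by
    simpa [Function.comp_def] using
      ((Measure.measurePreserving_neg volume).integrableOn_comp_preimage
        (Homeomorph.neg ℝ).measurableEmbedding).2 hF
  rw [hS] at hF hFneg
  rw [hS, setIntegral_union ((Iic_disjoint_Ioi (by linarith)).mono_left Iio_subset_Iic_self)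
    measurableSet_Ioi (hF.mono_set subset_union_left) (hF.mono_set subset_union_right),
    ← integral_Iic_eq_integral_Iio, ← integral_comp_neg_Ioi, add_comm,
    ← integral_add (hF.mono_set subset_union_right) (hFneg.mono_set subset_union_right)]
  exact intervalIntegral_tendsto_integral_Ioi _
    ((hF.mono_set subset_union_right).add (hFneg.mono_set subset_union_right)) tendsto_id

theorem sin_mul_add_div_add_div_add_neg {m y u : ℝ} (hm : m ≠ 0) (hy : y ≠ 0) (hu : u ≠ 0)
    (h₁ : u + y ≠ 0) (h₂ : u - y ≠ 0) :
    sin (m * (u + y)) / (u + y) / u + sin (m * (-u + y)) / (-u + y) / -u =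
      m / y * (2 * cos (m * y) * sinc (m * u) - sinc (m * (u + y)) - sinc (m * (u - y))) := by
  rw [sinc_of_ne_zero (mul_ne_zero hm hu), sinc_of_ne_zero (mul_ne_zero hm h₁),
    sinc_of_ne_zero (mul_ne_zero hm h₂), show -u + y = -(u - y) by ring, mul_neg, sin_neg,
    mul_add, mul_sub, sin_add, sin_sub]
  field_simp
  ring

theorem tendsto_integral_sin_mul_add_div_add_div_add_neg {m y ε : ℝ} (hm : 0 < m) (hy : y ≠ 0)
    (hε : 0 < ε) :
    Tendsto (fun R => ∫ u in ε..R,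
        (sin (m * (u + y)) / (u + y) / u + sin (m * (-u + y)) / (-u + y) / -u)) atTop
      (𝓝 ((2 * cos (m * y) * (π / 2 - sineIntegral (m * ε)) -
        (π / 2 - sineIntegral (m * (ε + y))) - (π / 2 - sineIntegral (m * (ε - y)))) / y)) := by
  have hzero := tendsto_integral_sinc_mul_add hm 0 ε
  have hplus := tendsto_integral_sinc_mul_add hm y ε
  have hminus := tendsto_integral_sinc_mul_add hm (-y) ε
  simp only [add_zero, ← sub_eq_add_neg] at hzero hminus
  convert ((((hzero.const_mul (2 * cos (m * y))).sub hplus).sub hminus).const_mul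
    (m / y)).congr' ?_ using 2
  · field_simp
  filter_upwards [eventually_ge_atTop ε] with R hR
  rw [← intervalIntegral.integral_const_mul, ← intervalIntegral.integral_sub,
    ← intervalIntegral.integral_sub, ← intervalIntegral.integral_const_mul]
  · refine intervalIntegral.integral_congr_ae ?_
    filter_upwards [Measure.ae_ne volume y, Measure.ae_ne volume (-y)] with u hu₁ hu₂ hu
    have hu₀ : 0 < u := hε.trans (by simpa [hR] using hu.1)
    exact (sin_mul_add_div_add_div_add_neg hm.ne' hy hu₀.ne'
      (by contrapose! hu₂; linarith) (sub_ne_zero.2 hu₁)).symm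
  all_goals exact Continuous.intervalIntegrable (by fun_prop) _ _

/-- For `m > 0`, the Hilbert transform of `x ↦ sin(mx)/x` is `y ↦ (cos(my) − 1)/y`. -/
theorem hilbert_sin_div (m : ℝ) (hm : 0 < m) (y : ℝ) :
    HilbertTransformAt (fun x : ℝ => Real.sin (m * x) / x) y
      ((Real.cos (m * y) - 1) / y) := by
  have hPV (ε : ℝ) (hε : 0 < ε) : Tendsto (fun R => ∫ u in ε..R,
      (sin (m * (u + y)) / (u + y) / u + sin (m * (-u + y)) / (-u + y) / -u)) atTop
      (𝓝 (∫ x in {x | ε < |x - y|}, sin (m * x) / x / (x - y))) := by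
    simpa only [setIntegral_abs_sub_gt_eq, add_sub_cancel_right] using
      tendsto_intervalIntegral_add_comp_neg hε.le
        (integrableOn_sin_mul_add_div_add_div hm.le y hε)
  rcases eq_or_ne y 0 with rfl | hy
  · refine tendsto_const_nhds.congr' ?_
    filter_upwards [self_mem_nhdsWithin] with ε (hε : 0 < ε)
    have hodd := hPV ε hε
    simp only [add_zero, mul_neg, sin_neg, neg_div, div_neg, neg_neg, add_neg_cancel,
      intervalIntegral.integral_zero] at hodd
    rw [tendsto_nhds_unique hodd tendsto_const_nhds]
    simp
  · set Φ : ℝ → ℝ := fun ε => (2 * cos (m * y) * (π / 2 - sineIntegral (m * ε)) -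
      (π / 2 - sineIntegral (m * (ε + y))) - (π / 2 - sineIntegral (m * (ε - y)))) / y
    have hΦ : Tendsto (fun ε => 1 / π * Φ ε) (𝓝[>] 0) (𝓝 ((cos (m * y) - 1) / y)) := by
      have hΦ₀ : 1 / π * Φ 0 = (cos (m * y) - 1) / y := by
        simp only [Φ, mul_zero, zero_add, zero_sub, mul_neg, sineIntegral_zero, sineIntegral_neg]
        field_simp
        ring
      rw [← hΦ₀]
      exact ((by fun_prop : Continuous fun ε => 1 / π * Φ ε).tendsto 0).mono_left
        nhdsWithin_le_nhds
    refine hΦ.congr' ?_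
    filter_upwards [self_mem_nhdsWithin] with ε (hε : 0 < ε)
    rw [tendsto_nhds_unique (hPV ε hε)
      (tendsto_integral_sin_mul_add_div_add_div_add_neg hm hy hε)]
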